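/- Let p ∈ Δ^{N−1} be a probability vector and σ a permutation of {1,…,N}. For every index 1 ≤ i ≤ N−1 with S_i(p) > 0, the uniform probability of the event { ω ∈ [0,1)^{N−1} : a(p, ω) = σ(i) } equals (p_{σ(i)} / S_i(p)) · Π_{j=1}^{i−1} (1 − α_j(p)), and this quantity equals p_{σ(i)}. -/

import Mathlib

open MeasureTheory Finset

noncomputable section

/-- Tail sum `S_i(p) = ∑_{j=i}^{N} p_{σ(j)}`, with `N = n+1` and indices as `Fin (n+1)`. -/
def tailSum {n : ℕ} (σ : Equiv.Perm (Fin (n + 1))) (p : Fin (n + 1) → ℝ)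
    (i : Fin (n + 1)) : ℝ :=
  ∑ j ∈ Finset.Ici i, p (σ j)

/-- Threshold `α_i(p) = p_{σ(i)} / S_i(p)` if `S_i(p) > 0`, else `p_{σ(i)}`. -/
def threshold {n : ℕ} (σ : Equiv.Perm (Fin (n + 1))) (p : Fin (n + 1) → ℝ)
    (i : Fin (n + 1)) : ℝ :=
  if 0 < tailSum σ p i then p (σ i) / tailSum σ p i else p (σ i)

open Classical in
/-- The action `a(p, ω)`: `σ(i)` for the smallest index `i` (among the first `n = N - 1`
indices) with `ω_i < α_i(p)`, and `σ(N)` if no such index exists. -/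
def act {n : ℕ} (σ : Equiv.Perm (Fin (n + 1))) (p : Fin (n + 1) → ℝ)
    (ω : Fin n → ℝ) : Fin (n + 1) :=
  if h : ∃ k : Fin n, ω k < threshold σ p k.castSucc then
    σ (Fin.find (fun i : Fin n => ω i < threshold σ p i.castSucc) h).castSucc
  else σ (Fin.last n)

/-- The uniform (product Lebesgue) probability measure on `[0,1)^n`. -/
def unif (n : ℕ) : Measure (Fin n → ℝ) :=
  Measure.pi fun _ => volume.restrict (Set.Ico (0 : ℝ) 1)

/-!
The event `act σ p ω = σ i` says that `i` is the first coordinate of `ω` to fall below its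
threshold, a box in `[0,1)^(N-1)` whose uniform measure is `α_i ∏_{j<i} (1 - α_j)`.
Since `(1 - α_j) S_j = S_{j+1}` and `S_1 = 1`, the product telescopes to `S_i`, and
`α_i S_i = p_{σ(i)}`.
-/

theorem volume_restrict_Ico_Iio {a : ℝ} (ha : a ≤ 1) :
    (volume : Measure ℝ).restrict (Set.Ico 0 1) (Set.Iio a) = ENNReal.ofReal a := by
  rw [Measure.restrict_apply measurableSet_Iio, Set.inter_comm, Set.Ico_inter_Iio,
    min_eq_right ha, Real.volume_Ico, sub_zero]

theorem volume_restrict_Ico_Ici {a : ℝ} (ha : 0 ≤ a) :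
    (volume : Measure ℝ).restrict (Set.Ico 0 1) (Set.Ici a) = ENNReal.ofReal (1 - a) := by
  rw [Measure.restrict_apply measurableSet_Ici, Set.inter_comm, Set.Ico_inter_Ici,
    sup_eq_right.2 ha, Real.volume_Ico]

section FirstHit

variable {n : ℕ}

def firstHitSet (t : Fin n → ℝ) (i : Fin n) : Set (Fin n → ℝ) :=
  {ω | ω i < t i ∧ ∀ j < i, t j ≤ ω j}

theorem firstHitSet_eq_pi (t : Fin n → ℝ) (i : Fin n) :
    firstHitSet t i = Set.univ.pi fun j =>
      if j < i then Set.Ici (t j) else if j = i then Set.Iio (t i) else Set.univ := by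
  ext ω
  simp only [firstHitSet, Set.mem_ofPred_eq, Set.mem_pi, Set.mem_univ, true_implies]
  constructor
  · rintro ⟨hi, hlt⟩ j
    rcases lt_trichotomy j i with hj | rfl | hj
    · simpa [hj] using hlt j hj
    · simpa using hi
    · simp [hj.not_gt, hj.ne']
  · intro h
    exact ⟨by simpa using h i, fun j hj => by simpa [hj] using h j⟩

theorem unif_firstHitSet (t : Fin n → ℝ) (i : Fin n) (ht : ∀ j ≤ i, t j ∈ Set.Icc 0 1) :
    unif n (firstHitSet t i) = ENNReal.ofReal (t i * ∏ j ∈ Iio i, (1 - t j)) := by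
  classical
  rw [firstHitSet_eq_pi, unif, Measure.pi_pi,
    ← prod_subset (subset_univ (insert i (Iio i)))]
  · rw [prod_insert notMem_Iio_self, if_neg (lt_irrefl i), if_pos rfl,
      volume_restrict_Ico_Iio (ht i le_rfl).2, ENNReal.ofReal_mul (ht i le_rfl).1,
      ENNReal.ofReal_prod_of_nonneg fun j hj => sub_nonneg.2 (ht j (mem_Iio.1 hj).le).2]
    refine congrArg _ (prod_congr rfl fun j hj => ?_)
    rw [if_pos (mem_Iio.1 hj), volume_restrict_Ico_Ici (ht j (mem_Iio.1 hj).le).1]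
  · intro j _ hj
    simp only [mem_insert, mem_Iio, not_or] at hj
    rw [if_neg hj.2, if_neg hj.1, Measure.restrict_apply_univ, Real.volume_Ico, sub_zero,
      ENNReal.ofReal_one]

end FirstHit

section TailSum

variable {n : ℕ} (σ : Equiv.Perm (Fin (n + 1))) {p : Fin (n + 1) → ℝ}

theorem setOf_act_eq_castSucc (p : Fin (n + 1) → ℝ) (i : Fin n) :
    {ω | act σ p ω = σ i.castSucc} = firstHitSet (fun k => threshold σ p k.castSucc) i := by
  ext ω
  simp only [Set.mem_ofPred_eq, act]
  split_ifs with h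
  · simp only [Set.mem_ofPred_eq, σ.injective.eq_iff, Fin.castSucc_inj, Fin.find_eq_iff,
      firstHitSet, not_lt]
  · push Not at h
    simp [σ.injective.eq_iff, (Fin.castSucc_lt_last i).ne', firstHitSet, (h i).not_gt]

theorem tailSum_zero (hsum : ∑ k, p k = 1) : tailSum σ p 0 = 1 := by
  simp [tailSum, Equiv.sum_comp, hsum]

theorem tailSum_castSucc (p : Fin (n + 1) → ℝ) (j : Fin n) :
    tailSum σ p j.castSucc = p (σ j.castSucc) + tailSum σ p j.succ := by
  rw [tailSum, tailSum, ← Ioi_insert, sum_insert notMem_Ioi_self]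
  congr 2
  ext k
  simp [Fin.castSucc_lt_iff_succ_le]

theorem tailSum_antitone (hp : ∀ k, 0 ≤ p k) : Antitone (tailSum σ p) :=
  fun _ _ hab => sum_le_sum_of_subset_of_nonneg (Ici_subset_Ici.2 hab) fun _ _ _ => hp _

theorem le_tailSum (hp : ∀ k, 0 ≤ p k) (j : Fin (n + 1)) : p (σ j) ≤ tailSum σ p j :=
  single_le_sum (fun _ _ => hp _) (mem_Ici.2 le_rfl)

theorem threshold_mem_Icc (hp : ∀ k, 0 ≤ p k) (j : Fin (n + 1)) :
    threshold σ p j ∈ Set.Icc 0 1 := by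
  unfold threshold
  split_ifs with h
  · exact ⟨div_nonneg (hp _) h.le, div_le_one_of_le₀ (le_tailSum σ hp j) h.le⟩
  · exact ⟨hp _, (le_tailSum σ hp j).trans ((not_lt.1 h).trans zero_le_one)⟩

theorem one_sub_threshold_mul_tailSum {j : Fin n} (h : 0 < tailSum σ p j.castSucc) :
    (1 - threshold σ p j.castSucc) * tailSum σ p j.castSucc = tailSum σ p j.succ := by
  rw [threshold, if_pos h, sub_mul, div_mul_cancel₀ _ h.ne', one_mul, tailSum_castSucc]
  ring

theorem prod_Iio_one_sub_threshold (hp : ∀ k, 0 ≤ p k) (hsum : ∑ k, p k = 1) (i : Fin n)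
    (hS : 0 < tailSum σ p i.castSucc) :
    ∏ j ∈ Iio i, (1 - threshold σ p j.castSucc) = tailSum σ p i.castSucc := by
  obtain ⟨m, rfl⟩ := Nat.exists_eq_add_one_of_ne_zero i.pos.ne'
  induction i using Fin.induction with
  | zero => rw [Iio_eq_empty.2 fun b _ => Fin.zero_le b, prod_empty, Fin.castSucc_zero, tailSum_zero σ hsum]
  | succ k ih =>
    have hk : 0 < tailSum σ p k.castSucc.castSucc :=
      hS.trans_le (tailSum_antitone σ hp (Fin.castSucc_le_castSucc_iff.2 k.castSucc_le_succ))
    have hIio : Iio k.succ = insert k.castSucc (Iio k.castSucc) := by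
      ext j
      simp only [mem_Iio, mem_insert, Fin.lt_def, Fin.ext_iff, Fin.val_succ, Fin.val_castSucc]
      omega
    rw [hIio, prod_insert notMem_Iio_self, ih hk, one_sub_threshold_mul_tailSum σ hk,
      Fin.succ_castSucc]

end TailSum

/-- For every index `1 ≤ i ≤ N-1` with `S_i(p) > 0`, the uniform probability of the event
`{ω ∈ [0,1)^{N-1} : a(p, ω) = σ(i)}` equals `(p_{σ(i)} / S_i(p)) · ∏_{j<i} (1 − α_j(p))`,
and this quantity equals `p_{σ(i)}`. -/
theorem prob_act_eq (n : ℕ) (σ : Equiv.Perm (Fin (n + 1)))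
    (p : Fin (n + 1) → ℝ) (hp : ∀ k, 0 ≤ p k) (hsum : ∑ k, p k = 1)
    (i : Fin n) (hS : 0 < tailSum σ p i.castSucc) :
    unif n {ω | act σ p ω = σ i.castSucc} =
      ENNReal.ofReal ((p (σ i.castSucc) / tailSum σ p i.castSucc) *
        ∏ j ∈ Finset.Iio i, (1 - threshold σ p j.castSucc)) ∧
    (p (σ i.castSucc) / tailSum σ p i.castSucc) *
        ∏ j ∈ Finset.Iio i, (1 - threshold σ p j.castSucc) = p (σ i.castSucc) := by
  have hα : threshold σ p i.castSucc = p (σ i.castSucc) / tailSum σ p i.castSucc := if_pos hS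
  refine ⟨?_, by rw [prod_Iio_one_sub_threshold σ hp hsum i hS, div_mul_cancel₀ _ hS.ne']⟩
  rw [setOf_act_eq_castSucc, unif_firstHitSet _ _ fun j _ => threshold_mem_Icc σ hp _, hα]
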